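/- arXiv:1609.07558 — 6 statements merged into one kernel-verified Lean document; each statement's English description precedes it below -/
import Mathlib

section
/- Let X∞ ≥ 0 satisfy X∞ = A(1+X∞) in distribution with A = exp(σ√τ Z + (m-σ²/2)τ) independent of X∞, Z standard normal. Then for every n ∈ ℕ, E[X∞^{-n}] = exp(σ²τ n(n+1)/2 - n m τ) · E[(1+X∞)^{-n}] ≤ exp(σ²τ n(n+1)/2 - n m τ). In particular all negative integer moments of X∞ are finite. -/
open MeasureTheory ProbabilityTheory Real

/-!
Applying `x ↦ x ^ (-n)` to both sides of `X∞ = A(1+X∞)` in law and using independence gives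
`E[X∞^{-n}] = E[A^{-n}] E[(1+X∞)^{-n}]`. The first factor is a log-normal moment,
`E[exp(cZ + d)] = exp(c²/2 + d)` with `c = -nσ√τ`, and the second lies in `[0, 1]`
because `1 + X∞ ≥ 1`.
-/

section Gaussian

variable {Ω : Type*} [MeasurableSpace Ω] {P : Measure Ω} {Z : Ω → ℝ} {μ : ℝ} {v : NNReal}

lemma integrable_exp_mul_add_of_map_eq_gaussianReal [IsProbabilityMeasure P]
    (hZ : P.map Z = gaussianReal μ v) (a b : ℝ) : Integrable (fun ω => exp (a * Z ω + b)) P := by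
  simp_rw [exp_add]
  refine Integrable.mul_const ?_ _
  rw [← mgf_pos_iff, mgf_gaussianReal hZ]
  exact exp_pos _

lemma integral_exp_mul_add_of_map_eq_gaussianReal (hZ : P.map Z = gaussianReal μ v)
    (a b : ℝ) : ∫ ω, exp (a * Z ω + b) ∂P = exp (μ * a + v * a ^ 2 / 2 + b) := by
  simp_rw [exp_add _ b, integral_mul_const]
  rw [← mgf, mgf_gaussianReal hZ]

end Gaussian

lemma mul_one_add_rpow_eq {Ω : Type*} {A X : Ω → ℝ} {r : ℝ} (hA0 : ∀ ω, 0 ≤ A ω)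
    (hX0 : ∀ ω, 0 ≤ X ω) :
    (fun ω => (A ω * (1 + X ω)) ^ r) = fun ω => A ω ^ r * (1 + X ω) ^ r :=
  funext fun ω => mul_rpow (hA0 ω) (by linarith [hX0 ω])

section Perpetuity

variable {Ω : Type*} [MeasurableSpace Ω] {P : Measure Ω} {A X : Ω → ℝ} {r : ℝ}

lemma integrable_one_add_rpow_of_nonpos [IsFiniteMeasure P] (hX : AEMeasurable X P)
    (hX0 : ∀ ω, 0 ≤ X ω) (hr : r ≤ 0) : Integrable (fun ω => (1 + X ω) ^ r) P := by
  refine (integrable_const (1 : ℝ)).mono' ((hX.const_add 1).pow_const r).aestronglyMeasurable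
    (Filter.Eventually.of_forall fun ω => ?_)
  rw [norm_of_nonneg (rpow_nonneg (by linarith [hX0 ω]) r)]
  exact rpow_le_one_of_one_le_of_nonpos (by linarith [hX0 ω]) hr

lemma integral_one_add_rpow_le_one [IsProbabilityMeasure P] (hX0 : ∀ ω, 0 ≤ X ω) (hr : r ≤ 0) :
    ∫ ω, (1 + X ω) ^ r ∂P ≤ 1 := by
  refine (integral_mono_of_nonneg ?_ (integrable_const 1) ?_).trans_eq (by simp)
  · exact Filter.Eventually.of_forall fun ω => rpow_nonneg (by linarith [hX0 ω]) r
  · exact Filter.Eventually.of_forall fun ω =>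
      rpow_le_one_of_one_le_of_nonpos (by linarith [hX0 ω]) hr

lemma integrable_mul_one_add_rpow [IsFiniteMeasure P] (hX : AEMeasurable X P)
    (hA0 : ∀ ω, 0 ≤ A ω) (hX0 : ∀ ω, 0 ≤ X ω) (hAX : IndepFun A X P) (hr : r ≤ 0)
    (hAr : Integrable (fun ω => A ω ^ r) P) :
    Integrable (fun ω => (A ω * (1 + X ω)) ^ r) P := by
  rw [mul_one_add_rpow_eq hA0 hX0]
  exact (hAX.comp (measurable_id.pow_const r) ((measurable_const_add 1).pow_const r)
    ).integrable_mul hAr (integrable_one_add_rpow_of_nonpos hX hX0 hr)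

lemma integral_mul_one_add_rpow (hA : AEMeasurable A P) (hX : AEMeasurable X P)
    (hA0 : ∀ ω, 0 ≤ A ω) (hX0 : ∀ ω, 0 ≤ X ω) (hAX : IndepFun A X P) :
    ∫ ω, (A ω * (1 + X ω)) ^ r ∂P = (∫ ω, A ω ^ r ∂P) * ∫ ω, (1 + X ω) ^ r ∂P := by
  rw [mul_one_add_rpow_eq hA0 hX0]
  exact (hAX.comp (measurable_id.pow_const r) ((measurable_const_add 1).pow_const r)
    ).integral_fun_mul_eq_mul_integral (hA.pow_const r).aestronglyMeasurable
    ((hX.const_add 1).pow_const r).aestronglyMeasurable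

lemma identDistrib_rpow_of_map_eq_map_mul_one_add (hA : AEMeasurable A P)
    (hX : AEMeasurable X P) (hfix : P.map X = P.map (fun ω => A ω * (1 + X ω))) :
    IdentDistrib (fun ω => X ω ^ r) (fun ω => (A ω * (1 + X ω)) ^ r) P P :=
  (IdentDistrib.mk hX (hA.mul (hX.const_add 1)) hfix).comp (measurable_id.pow_const r)

theorem integrable_rpow_of_map_eq_map_mul_one_add [IsFiniteMeasure P] (hA : AEMeasurable A P)
    (hX : AEMeasurable X P) (hA0 : ∀ ω, 0 ≤ A ω) (hX0 : ∀ ω, 0 ≤ X ω) (hAX : IndepFun A X P)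
    (hfix : P.map X = P.map (fun ω => A ω * (1 + X ω))) (hr : r ≤ 0)
    (hAr : Integrable (fun ω => A ω ^ r) P) : Integrable (fun ω => X ω ^ r) P :=
  (identDistrib_rpow_of_map_eq_map_mul_one_add hA hX hfix).integrable_iff.mpr
    (integrable_mul_one_add_rpow hX hA0 hX0 hAX hr hAr)

theorem integral_rpow_of_map_eq_map_mul_one_add (hA : AEMeasurable A P)
    (hX : AEMeasurable X P) (hA0 : ∀ ω, 0 ≤ A ω) (hX0 : ∀ ω, 0 ≤ X ω) (hAX : IndepFun A X P)
    (hfix : P.map X = P.map (fun ω => A ω * (1 + X ω))) :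
    ∫ ω, X ω ^ r ∂P = (∫ ω, A ω ^ r ∂P) * ∫ ω, (1 + X ω) ^ r ∂P := by
  rw [(identDistrib_rpow_of_map_eq_map_mul_one_add hA hX hfix).integral_eq,
    integral_mul_one_add_rpow hA hX hA0 hX0 hAX]

end Perpetuity

theorem stmt3_general {Ω : Type*} [MeasureSpace Ω] [IsProbabilityMeasure (ℙ : Measure Ω)]
    (σ τ m : ℝ) (hτ : 0 < τ)
    (Z : Ω → ℝ) (hZ : Measure.map Z ℙ = gaussianReal 0 1)
    (A X : Ω → ℝ)
    (hA : ∀ ω, A ω = Real.exp (σ * Real.sqrt τ * Z ω + (m - σ ^ 2 / 2) * τ))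
    (hXpos : ∀ ω, 0 ≤ X ω) (hXmeas : Measurable X)
    (hindep : IndepFun A X ℙ)
    (hfix : Measure.map X ℙ = Measure.map (fun ω => A ω * (1 + X ω)) ℙ) :
    ∀ n : ℕ,
      Integrable (fun ω => X ω ^ (-(n : ℝ))) ℙ ∧
      𝔼[fun ω => X ω ^ (-(n : ℝ))]
        = Real.exp (σ ^ 2 * τ * n * (n + 1) / 2 - n * m * τ)
          * 𝔼[fun ω => (1 + X ω) ^ (-(n : ℝ))] ∧
      𝔼[fun ω => X ω ^ (-(n : ℝ))]
        ≤ Real.exp (σ ^ 2 * τ * n * (n + 1) / 2 - n * m * τ) := by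
  intro n
  have hA0 (ω : Ω) : 0 ≤ A ω := hA ω ▸ (exp_pos _).le
  have hAm : AEMeasurable A ℙ := by
    have hZm : AEMeasurable Z ℙ := aemeasurable_of_map_neZero (by rw [hZ]; infer_instance)
    rw [funext hA]
    exact measurable_exp.comp_aemeasurable ((hZm.const_mul _).add_const _)
  have hAn : (fun ω => A ω ^ (-(n : ℝ))) =
      fun ω => exp (-n * σ * sqrt τ * Z ω + -n * (m - σ ^ 2 / 2) * τ) := by
    funext ω
    rw [hA, ← exp_mul]
    ring_nf
  have hAn_integral : ∫ ω, A ω ^ (-(n : ℝ)) = exp (σ ^ 2 * τ * n * (n + 1) / 2 - n * m * τ) := by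
    rw [hAn, integral_exp_mul_add_of_map_eq_gaussianReal hZ]
    congr 1
    have := sq_sqrt hτ.le
    push_cast
    linear_combination (n * σ) ^ 2 / 2 * this
  have heq := integral_rpow_of_map_eq_map_mul_one_add (r := -(n : ℝ)) hAm hXmeas.aemeasurable
    hA0 hXpos hindep hfix
  rw [hAn_integral] at heq
  refine ⟨?_, heq, ?_⟩
  · refine integrable_rpow_of_map_eq_map_mul_one_add hAm hXmeas.aemeasurable hA0 hXpos hindep
      hfix (by simp) ?_
    rw [hAn]
    exact integrable_exp_mul_add_of_map_eq_gaussianReal hZ _ _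
  · rw [heq]
    exact mul_le_of_le_one_right (exp_pos _).le (integral_one_add_rpow_le_one hXpos (by simp))

/-- Negative integer moments of the stationary solution `X∞ = A(1+X∞)`:
`E[X∞^{-n}] = exp(σ²τ n(n+1)/2 - nmτ) E[(1+X∞)^{-n}] ≤ exp(σ²τ n(n+1)/2 - nmτ)`,
and in particular all negative integer moments are finite. -/
theorem stmt3 {Ω : Type*} [MeasureSpace Ω] [IsProbabilityMeasure (ℙ : Measure Ω)]
    (σ τ m : ℝ) (hσ : 0 < σ) (hτ : 0 < τ) (hm : m < σ ^ 2 / 2)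
    (Z : Ω → ℝ) (hZ : Measure.map Z ℙ = gaussianReal 0 1)
    (A X : Ω → ℝ)
    (hA : ∀ ω, A ω = Real.exp (σ * Real.sqrt τ * Z ω + (m - σ ^ 2 / 2) * τ))
    (hXpos : ∀ ω, 0 ≤ X ω) (hXmeas : Measurable X)
    (hindep : IndepFun A X ℙ)
    (hfix : Measure.map X ℙ = Measure.map (fun ω => A ω * (1 + X ω)) ℙ) :
    ∀ n : ℕ,
      Integrable (fun ω => X ω ^ (-(n : ℝ))) ℙ ∧
      𝔼[fun ω => X ω ^ (-(n : ℝ))]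
        = Real.exp (σ ^ 2 * τ * n * (n + 1) / 2 - n * m * τ)
          * 𝔼[fun ω => (1 + X ω) ^ (-(n : ℝ))] ∧
      𝔼[fun ω => X ω ^ (-(n : ℝ))]
        ≤ Real.exp (σ ^ 2 * τ * n * (n + 1) / 2 - n * m * τ) :=
  stmt3_general σ τ m hτ Z hZ A X hA hXpos hXmeas hindep hfix
end

section
/- Under the assumptions of the fixed-point equation X∞ = A(1+X∞), for every ε > 0 and n ∈ ℕ, P(X∞ ≤ ε) ≤ ε^n · exp(σ²τ n(n+1)/2 - n m τ). -/
/-!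
Since `X∞ ≥ 0` and `A > 0`, the event `A(1 + X∞) ≤ ε` forces `A ≤ ε`, so stationarity gives
`P(X∞ ≤ ε) ≤ P(A ≤ ε)`. Now `log A` is Gaussian with mean `(m - σ²/2)τ` and variance `σ²τ`, and the
Chernoff bound at `t = -n`, i.e. Markov's inequality for `A⁻ⁿ`, yields
`P(A ≤ ε) ≤ εⁿ 𝔼[A⁻ⁿ] = εⁿ exp(σ²τ n(n+1)/2 - nmτ)`.
-/

open MeasureTheory ProbabilityTheory Real

lemma measure_le_le_measure_le_of_map_eq_map_mul_one_add {Ω : Type*} [MeasurableSpace Ω]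
    {μ : Measure Ω} {A X : Ω → ℝ} (hA : AEMeasurable A μ) (hA0 : ∀ ω, 0 ≤ A ω)
    (hX : Measurable X) (hX0 : ∀ ω, 0 ≤ X ω)
    (hfix : μ.map X = μ.map (fun ω => A ω * (1 + X ω))) (ε : ℝ) :
    μ {ω | X ω ≤ ε} ≤ μ {ω | A ω ≤ ε} :=
  calc μ {ω | X ω ≤ ε} = μ.map X (Set.Iic ε) := (Measure.map_apply hX measurableSet_Iic).symm
    _ = μ {ω | A ω * (1 + X ω) ≤ ε} := by
      rw [hfix, Measure.map_apply_of_aemeasurable (by fun_prop) measurableSet_Iic]; rfl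
    _ ≤ μ {ω | A ω ≤ ε} := measure_mono fun ω (hω : _ ≤ ε) =>
      le_trans (le_mul_of_one_le_right (hA0 ω) (by linarith [hX0 ω])) hω

lemma measureReal_le_le_of_hasLaw_gaussianReal {Ω : Type*} [MeasurableSpace Ω]
    {P : Measure Ω} [IsProbabilityMeasure P] {Y : Ω → ℝ} {μ : ℝ} {v : NNReal}
    (hY : HasLaw Y (gaussianReal μ v) P) (c : ℝ) {t : ℝ} (ht : t ≤ 0) :
    P.real {ω | Y ω ≤ c} ≤ exp (-t * c + μ * t + v * t ^ 2 / 2) := by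
  have hmgf : mgf Y P t = exp (μ * t + v * t ^ 2 / 2) := mgf_gaussianReal hY.map_eq t
  have hint : Integrable (fun ω => exp (t * Y ω)) P := mgf_pos_iff.mp (hmgf ▸ exp_pos _)
  calc P.real {ω | Y ω ≤ c} ≤ exp (-t * c) * mgf Y P t := measure_le_le_exp_mul_mgf c ht hint
    _ = exp (-t * c + μ * t + v * t ^ 2 / 2) := by rw [hmgf, add_assoc, ← exp_add]

theorem stmt4_general {Ω : Type*} [MeasureSpace Ω] [IsProbabilityMeasure (ℙ : Measure Ω)]
    (σ τ m : ℝ) (hτ : 0 < τ)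
    (Z : Ω → ℝ) (hZ : Measure.map Z ℙ = gaussianReal 0 1)
    (A X : Ω → ℝ)
    (hA : ∀ ω, A ω = Real.exp (σ * Real.sqrt τ * Z ω + (m - σ ^ 2 / 2) * τ))
    (hXpos : ∀ ω, 0 ≤ X ω) (hXmeas : Measurable X)
    (hfix : Measure.map X ℙ = Measure.map (fun ω => A ω * (1 + X ω)) ℙ) :
    ∀ ε : ℝ, 0 < ε → ∀ n : ℕ,
      (ℙ {ω | X ω ≤ ε}).toReal
        ≤ ε ^ n * Real.exp (σ ^ 2 * τ * n * (n + 1) / 2 - n * m * τ) := by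
  intro ε hε n
  set Y : Ω → ℝ := fun ω => σ * √τ * Z ω + (m - σ ^ 2 / 2) * τ
  have hZlaw : HasLaw Z (gaussianReal 0 1) ℙ :=
    ⟨aemeasurable_of_map_neZero (by rw [hZ]; infer_instance), hZ⟩
  have hYlaw :=
    gaussianReal_add_const (gaussianReal_const_mul hZlaw (σ * √τ)) ((m - σ ^ 2 / 2) * τ)
  have hA_eq : A = fun ω => exp (Y ω) := funext hA
  have hstat := measure_le_le_measure_le_of_map_eq_map_mul_one_add
    (hA_eq ▸ hYlaw.aemeasurable.exp) (fun ω => hA_eq ▸ (exp_pos _).le) hXmeas hXpos hfix ε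
  have hlog : {ω | A ω ≤ ε} = {ω | Y ω ≤ log ε} := by
    simp only [hA_eq, ← le_log_iff_exp_le hε]
  calc (ℙ {ω | X ω ≤ ε}).toReal ≤ (ℙ : Measure Ω).real {ω | Y ω ≤ log ε} := by
        rw [← hlog]; exact ENNReal.toReal_mono (measure_ne_top _ _) hstat
    _ ≤ _ := measureReal_le_le_of_hasLaw_gaussianReal hYlaw (log ε) (t := -n) (by simp)
    _ = exp (n * log ε) * exp (σ ^ 2 * τ * n * (n + 1) / 2 - n * m * τ) := by
      rw [← exp_add]
      congr 1
      push_cast [mul_pow, sq_sqrt hτ.le]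
      ring
    _ = ε ^ n * exp (σ ^ 2 * τ * n * (n + 1) / 2 - n * m * τ) := by rw [exp_nat_mul, exp_log hε]

/-- Left-tail bound for the stationary solution of `X∞ = A(1+X∞)`:
for every `ε > 0` and `n ∈ ℕ`, `P(X∞ ≤ ε) ≤ εⁿ exp(σ²τ n(n+1)/2 - nmτ)`. -/
theorem stmt4 {Ω : Type*} [MeasureSpace Ω] [IsProbabilityMeasure (ℙ : Measure Ω)]
    (σ τ m : ℝ) (hσ : 0 < σ) (hτ : 0 < τ) (hm : m < σ ^ 2 / 2)
    (Z : Ω → ℝ) (hZ : Measure.map Z ℙ = gaussianReal 0 1)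
    (A X : Ω → ℝ)
    (hA : ∀ ω, A ω = Real.exp (σ * Real.sqrt τ * Z ω + (m - σ ^ 2 / 2) * τ))
    (hXpos : ∀ ω, 0 ≤ X ω) (hXmeas : Measurable X)
    (hindep : IndepFun A X ℙ)
    (hfix : Measure.map X ℙ = Measure.map (fun ω => A ω * (1 + X ω)) ℙ) :
    ∀ ε : ℝ, 0 < ε → ∀ n : ℕ,
      (ℙ {ω | X ω ≤ ε}).toReal
        ≤ ε ^ n * Real.exp (σ ^ 2 * τ * n * (n + 1) / 2 - n * m * τ) :=
  stmt4_general σ τ m hτ Z hZ A X hA hXpos hXmeas hfix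
end

section
/- Let X∞ ≥ 0 satisfy X∞ = A(1+X∞) in distribution (A log-normal as above, independent of X∞). Then lim_{ε→0} log P(X∞ ≤ ε) / (log ε)² = -1/(2σ²τ). -/
/-!
Since `A > 0` and `X∞ ≥ 0`, the fixed-point equation gives `P(X∞ ≤ ε) ≤ P(A ≤ ε)`, and
independence of `A` and `X∞` gives `P(A ≤ ε/2) · P(X∞ ≤ 1) ≤ P(X∞ ≤ ε)`, where `P(X∞ ≤ 1) > 0`.
Both bounds are standard Gaussian tails `Φ((log ε - d) / (σ√τ))`, and `log Φ(t) ~ -t²/2` as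
`t → -∞`; the shift `d` and the factor `P(X∞ ≤ 1)` are negligible against `(log ε)²`.
-/

open MeasureTheory ProbabilityTheory Real Set Filter
open scoped Topology NNReal

lemma gaussianPDFReal_zero_one (x : ℝ) :
    gaussianPDFReal 0 1 x = (√(2 * π))⁻¹ * exp (-x ^ 2 / 2) := by
  simp [gaussianPDFReal]

lemma cdf_gaussianReal_eq_integral (μ : ℝ) {v : ℝ≥0} (hv : v ≠ 0) (t : ℝ) :
    cdf (gaussianReal μ v) t = ∫ x in Iic t, gaussianPDFReal μ v x := by
  rw [cdf_eq_real, measureReal_def, gaussianReal_apply_eq_integral μ hv,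
    ENNReal.toReal_ofReal (setIntegral_nonneg measurableSet_Iic
      fun x _ => gaussianPDFReal_nonneg μ v x)]

lemma cdf_gaussianReal_pos (μ : ℝ) {v : ℝ≥0} (hv : v ≠ 0) (t : ℝ) :
    0 < cdf (gaussianReal μ v) t := by
  rw [cdf_eq_real, measureReal_def]
  refine ENNReal.toReal_pos (fun h => ?_) (measure_ne_top _ _)
  have := gaussianReal_absolutelyContinuous' μ hv h
  rw [Real.volume_Iic] at this
  exact ENNReal.top_ne_zero this

lemma cdf_gaussianReal_le_exp {t : ℝ} (ht : t ≤ -1) :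
    cdf (gaussianReal 0 1) t ≤ exp (-t ^ 2 / 2) := by
  have hbound : ∀ x ∈ Iic t, gaussianPDFReal 0 1 x ≤ exp (-t ^ 2 / 2 - t) * exp x := by
    intro x (hx : x ≤ t)
    have hsqrt : 1 ≤ √(2 * π) := Real.one_le_sqrt.mpr (by linarith [Real.pi_gt_three])
    calc gaussianPDFReal 0 1 x = (√(2 * π))⁻¹ * exp (-x ^ 2 / 2) := gaussianPDFReal_zero_one x
      _ ≤ 1 * exp (-x ^ 2 / 2) := by gcongr; exact inv_le_one_of_one_le₀ hsqrt
      _ ≤ exp (-t ^ 2 / 2 - t) * exp x := by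
        rw [one_mul, ← exp_add, exp_le_exp]; nlinarith
  calc cdf (gaussianReal 0 1) t = ∫ x in Iic t, gaussianPDFReal 0 1 x :=
        cdf_gaussianReal_eq_integral 0 one_ne_zero t
    _ ≤ ∫ x in Iic t, exp (-t ^ 2 / 2 - t) * exp x :=
        setIntegral_mono_on (integrable_gaussianPDFReal 0 1).integrableOn
          ((integrableOn_exp_Iic t).const_mul _) measurableSet_Iic hbound
    _ = exp (-t ^ 2 / 2) := by
        rw [integral_const_mul, integral_exp_Iic, ← exp_add, sub_add_cancel]

lemma exp_le_cdf_gaussianReal {t : ℝ} (ht : t ≤ 0) :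
    (√(2 * π))⁻¹ * exp (-(t - 1) ^ 2 / 2) ≤ cdf (gaussianReal 0 1) t := by
  have hbound : ∀ x ∈ Ioc (t - 1) t,
      (√(2 * π))⁻¹ * exp (-(t - 1) ^ 2 / 2) ≤ gaussianPDFReal 0 1 x := by
    rintro x ⟨hx₁, hx₂⟩
    rw [gaussianPDFReal_zero_one]
    exact mul_le_mul_of_nonneg_left (exp_le_exp.mpr (by nlinarith)) (by positivity)
  have hint : IntegrableOn (gaussianPDFReal 0 1) (Iic t) :=
    (integrable_gaussianPDFReal 0 1).integrableOn
  calc (√(2 * π))⁻¹ * exp (-(t - 1) ^ 2 / 2)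
      = ∫ _ in Ioc (t - 1) t, (√(2 * π))⁻¹ * exp (-(t - 1) ^ 2 / 2) := by
        simp [measureReal_def, Real.volume_Ioc]
    _ ≤ ∫ x in Ioc (t - 1) t, gaussianPDFReal 0 1 x :=
        setIntegral_mono_on (integrableOn_const (by simp [Real.volume_Ioc]))
          (hint.mono_set Ioc_subset_Iic_self) measurableSet_Ioc hbound
    _ ≤ ∫ x in Iic t, gaussianPDFReal 0 1 x :=
        setIntegral_mono_set hint (ae_of_all _ (gaussianPDFReal_nonneg 0 1))
          Ioc_subset_Iic_self.eventuallyLE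
    _ = cdf (gaussianReal 0 1) t := (cdf_gaussianReal_eq_integral 0 one_ne_zero t).symm

lemma tendsto_log_cdf_gaussianReal_div_sq :
    Tendsto (fun t => log (cdf (gaussianReal 0 1) t) / t ^ 2) atBot (𝓝 (-1 / 2)) := by
  set C := log (√(2 * π))
  have hlower : Tendsto (fun t : ℝ => (-(t - 1) ^ 2 / 2 - C) / t ^ 2) atBot (𝓝 (-1 / 2)) := by
    have hcont : Tendsto (fun u : ℝ => -(1 - u) ^ 2 / 2 - C * u ^ 2) (𝓝 0) (𝓝 (-1 / 2)) := by
      convert (show Continuous (fun u : ℝ => -(1 - u) ^ 2 / 2 - C * u ^ 2) by fun_prop).tendsto 0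
        using 2
      norm_num
    refine (hcont.comp tendsto_inv_atBot_zero).congr' ?_
    filter_upwards [eventually_lt_atBot 0] with t ht
    simp only [Function.comp_apply]
    field_simp [ht.ne]
  refine tendsto_of_tendsto_of_tendsto_of_le_of_le' hlower tendsto_const_nhds ?_ ?_ <;>
    filter_upwards [eventually_le_atBot (-1)] with t ht
  · gcongr
    have hpos : 0 < (√(2 * π))⁻¹ * exp (-(t - 1) ^ 2 / 2) := by positivity
    have := log_le_log hpos (exp_le_cdf_gaussianReal (by linarith))
    rwa [log_mul (by positivity) (by positivity), log_inv, log_exp, add_comm,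
      ← sub_eq_add_neg] at this
  · calc log (cdf (gaussianReal 0 1) t) / t ^ 2 ≤ (-t ^ 2 / 2) / t ^ 2 := by
          gcongr
          simpa using log_le_log (cdf_gaussianReal_pos 0 one_ne_zero t) (cdf_gaussianReal_le_exp ht)
      _ = -1 / 2 := by field_simp [(by linarith : t ≠ 0)]

lemma Filter.Tendsto.div_sq_comp_affine {f : ℝ → ℝ} {L : ℝ}
    (hf : Tendsto (fun t => f t / t ^ 2) atBot (𝓝 L)) {s : ℝ} (hs : 0 < s) (d : ℝ) :
    Tendsto (fun u => f ((u - d) / s) / u ^ 2) atBot (𝓝 (L / s ^ 2)) := by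
  have hT : Tendsto (fun u : ℝ => (u - d) / s) atBot atBot :=
    (tendsto_atBot_add_const_right _ (-d) tendsto_id).atBot_div_const hs
  have hratio : Tendsto (fun u : ℝ => (1 - d * u⁻¹) / s) atBot (𝓝 (1 / s)) := by
    simpa using ((tendsto_inv_atBot_zero.const_mul d).const_sub 1).div_const s
  have hlim : L * (1 / s) ^ 2 = L / s ^ 2 := by rw [div_pow, one_pow, mul_one_div]
  refine hlim ▸ ((hf.comp hT).mul (hratio.pow 2)).congr' ?_
  filter_upwards [eventually_lt_atBot 0, hT.eventually (eventually_lt_atBot 0)] with u hu hTu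
  simp only [Function.comp_apply]
  have hud : u - d ≠ 0 := fun h => by simp [h] at hTu
  field_simp [hu.ne, hud]

lemma tendsto_log_const_mul_div {α : Type*} {l : Filter α} {a g : α → ℝ} {L : ℝ}
    (ha : Tendsto (fun x => log (a x) / g x) l (𝓝 L)) (ha_pos : ∀ᶠ x in l, 0 < a x)
    (hg : Tendsto g l atTop) {p : ℝ} (hp : 0 < p) :
    Tendsto (fun x => log (p * a x) / g x) l (𝓝 L) := by
  have hconst := (tendsto_const_nhds (x := log p)).div_atTop hg
  refine (zero_add L ▸ hconst.add ha).congr' ?_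
  filter_upwards [ha_pos] with x hx
  rw [log_mul hp.ne' hx.ne', add_div]

lemma tendsto_log_div_of_le_of_le {α : Type*} {l : Filter α} {F a b g : α → ℝ} {L : ℝ}
    (ha : Tendsto (fun x => log (a x) / g x) l (𝓝 L))
    (hb : Tendsto (fun x => log (b x) / g x) l (𝓝 L))
    (ha_pos : ∀ᶠ x in l, 0 < a x) (hg : ∀ᶠ x in l, 0 < g x)
    (haF : ∀ᶠ x in l, a x ≤ F x) (hFb : ∀ᶠ x in l, F x ≤ b x) :
    Tendsto (fun x => log (F x) / g x) l (𝓝 L) := by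
  refine tendsto_of_tendsto_of_tendsto_of_le_of_le' ha hb ?_ ?_
  · filter_upwards [ha_pos, hg, haF] with x hax hgx haFx
    gcongr
  · filter_upwards [ha_pos, hg, haF, hFb] with x hax hgx haFx hFbx
    gcongr
    linarith

lemma tendsto_log_sq_nhdsGT_zero : Tendsto (fun ε : ℝ => log ε ^ 2) (𝓝[>] 0) atTop := by
  simpa [sq] using tendsto_log_nhdsGT_zero.atBot_mul_atBot₀ tendsto_log_nhdsGT_zero

section LogNormal

variable {Ω : Type*} [MeasurableSpace Ω] {μ : Measure Ω} {Z : Ω → ℝ}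

lemma measure_exp_affine_le_eq_cdf [IsProbabilityMeasure μ]
    (hZ : μ.map Z = gaussianReal 0 1) {s : ℝ} (hs : 0 < s) (c : ℝ) {ε : ℝ} (hε : 0 < ε) :
    (μ {ω | exp (s * Z ω + c) ≤ ε}).toReal = cdf (gaussianReal 0 1) ((log ε - c) / s) := by
  have hZ_meas : AEMeasurable Z μ := aemeasurable_of_map_neZero (by rw [hZ]; infer_instance)
  have hset : {ω | exp (s * Z ω + c) ≤ ε} = Z ⁻¹' Iic ((log ε - c) / s) := by
    ext ω
    change exp (s * Z ω + c) ≤ ε ↔ Z ω ≤ (log ε - c) / s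
    rw [← le_log_iff_exp_le hε, le_div_iff₀ hs]
    constructor <;> intro h <;> linarith
  rw [hset, ← Measure.map_apply_of_aemeasurable hZ_meas measurableSet_Iic, hZ, cdf_eq_real,
    measureReal_def]

lemma tendsto_log_measure_exp_affine_le_div_sq [IsProbabilityMeasure μ]
    (hZ : μ.map Z = gaussianReal 0 1) {s : ℝ} (hs : 0 < s) (c : ℝ) {k : ℝ} (hk : 0 < k) :
    Tendsto (fun ε => log (μ {ω | exp (s * Z ω + c) ≤ ε / k}).toReal / log ε ^ 2)
      (𝓝[>] 0) (𝓝 (-1 / (2 * s ^ 2))) := by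
  have hlim := (tendsto_log_cdf_gaussianReal_div_sq.div_sq_comp_affine hs (c + log k)).comp
    tendsto_log_nhdsGT_zero
  rw [div_div] at hlim
  refine hlim.congr' ?_
  filter_upwards [self_mem_nhdsWithin] with ε (hε : 0 < ε)
  rw [Function.comp_apply, measure_exp_affine_le_eq_cdf hZ hs c (div_pos hε hk),
    log_div hε.ne' hk.ne', sub_sub, add_comm]

end LogNormal

section Perpetuity

variable {Ω : Type*} [MeasurableSpace Ω] {μ : Measure Ω} {A X : Ω → ℝ}

lemma measure_le_le_of_identDistrib_mul_one_add
    (hfix : IdentDistrib X (fun ω => A ω * (1 + X ω)) μ μ)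
    (hA : ∀ ω, 0 ≤ A ω) (hX : ∀ ω, 0 ≤ X ω) (ε : ℝ) :
    μ {ω | X ω ≤ ε} ≤ μ {ω | A ω ≤ ε} := by
  rw [show {ω | X ω ≤ ε} = X ⁻¹' Iic ε from rfl, hfix.measure_mem_eq measurableSet_Iic]
  refine measure_mono fun ω (hω : A ω * (1 + X ω) ≤ ε) => ?_
  show A ω ≤ ε
  nlinarith [hA ω, hX ω]

lemma measure_mul_measure_le_of_identDistrib_mul_one_add
    (hfix : IdentDistrib X (fun ω => A ω * (1 + X ω)) μ μ) (hindep : IndepFun A X μ)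
    (hA : ∀ ω, 0 ≤ A ω) {δ : ℝ} (hδ : 0 ≤ δ) (ε : ℝ) :
    μ {ω | A ω ≤ ε / (1 + δ)} * μ {ω | X ω ≤ δ} ≤ μ {ω | X ω ≤ ε} := by
  have hsub : A ⁻¹' Iic (ε / (1 + δ)) ∩ X ⁻¹' Iic δ ⊆ (fun ω => A ω * (1 + X ω)) ⁻¹' Iic ε := by
    rintro ω ⟨hAω, hXω : X ω ≤ δ⟩
    calc A ω * (1 + X ω) ≤ A ω * (1 + δ) := mul_le_mul_of_nonneg_left (by linarith) (hA ω)
      _ ≤ ε / (1 + δ) * (1 + δ) := mul_le_mul_of_nonneg_right hAω (by linarith)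
      _ = ε := div_mul_cancel₀ ε (by linarith)
  calc μ {ω | A ω ≤ ε / (1 + δ)} * μ {ω | X ω ≤ δ}
      = μ (A ⁻¹' Iic (ε / (1 + δ)) ∩ X ⁻¹' Iic δ) :=
        (hindep.measure_inter_preimage_eq_mul _ _ measurableSet_Iic measurableSet_Iic).symm
    _ ≤ μ ((fun ω => A ω * (1 + X ω)) ⁻¹' Iic ε) := measure_mono hsub
    _ = μ {ω | X ω ≤ ε} := (hfix.measure_mem_eq measurableSet_Iic).symm

lemma measure_le_pos_of_identDistrib_mul_one_add [IsProbabilityMeasure μ]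
    (hfix : IdentDistrib X (fun ω => A ω * (1 + X ω)) μ μ) (hindep : IndepFun A X μ)
    (hA : ∀ ω, 0 ≤ A ω) (hA_pos : ∀ x, 0 < x → 0 < μ {ω | A ω ≤ x}) {ε : ℝ} (hε : 0 < ε) :
    0 < μ {ω | X ω ≤ ε} := by
  obtain ⟨n, hn⟩ : ∃ n : ℕ, μ {ω | X ω ≤ n} ≠ 0 := by
    by_contra! h
    have hunion : (⋃ n : ℕ, {ω | X ω ≤ n}) = univ :=
      iUnion_eq_univ_iff.mpr fun ω => exists_nat_ge (X ω)
    simpa [hunion] using measure_iUnion_null h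
  calc 0 < μ {ω | A ω ≤ ε / (1 + n)} * μ {ω | X ω ≤ n} :=
        ENNReal.mul_pos (hA_pos _ (by positivity)).ne' hn
    _ ≤ μ {ω | X ω ≤ ε} :=
        measure_mul_measure_le_of_identDistrib_mul_one_add hfix hindep hA n.cast_nonneg ε

end Perpetuity

theorem stmt5_general {Ω : Type*} [MeasureSpace Ω] [IsProbabilityMeasure (ℙ : Measure Ω)]
    (σ τ m : ℝ) (hσ : 0 < σ) (hτ : 0 < τ)
    (Z : Ω → ℝ) (hZ : Measure.map Z ℙ = gaussianReal 0 1)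
    (A X : Ω → ℝ)
    (hA : ∀ ω, A ω = Real.exp (σ * Real.sqrt τ * Z ω + (m - σ ^ 2 / 2) * τ))
    (hXpos : ∀ ω, 0 ≤ X ω) (hXmeas : Measurable X)
    (hindep : IndepFun A X ℙ)
    (hfix : Measure.map X ℙ = Measure.map (fun ω => A ω * (1 + X ω)) ℙ) :
    Filter.Tendsto
      (fun ε : ℝ => Real.log (ℙ {ω | X ω ≤ ε}).toReal / (Real.log ε) ^ 2)
      (nhdsWithin 0 (Set.Ioi 0)) (nhds (-1 / (2 * σ ^ 2 * τ))) := by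
  set s := σ * √τ
  set c := (m - σ ^ 2 / 2) * τ
  have hs : 0 < s := by positivity
  obtain rfl : A = fun ω => exp (s * Z ω + c) := funext hA
  have hZ_meas : AEMeasurable Z ℙ := aemeasurable_of_map_neZero (by rw [hZ]; infer_instance)
  have hident : IdentDistrib X (fun ω => exp (s * Z ω + c) * (1 + X ω)) ℙ ℙ :=
    ⟨hXmeas.aemeasurable, by fun_prop, hfix⟩
  have hA_nonneg : ∀ ω, 0 ≤ exp (s * Z ω + c) := fun ω => (exp_pos _).le
  have hA_pos : ∀ ε, 0 < ε → 0 < (ℙ {ω | exp (s * Z ω + c) ≤ ε}).toReal := fun ε hε =>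
    measure_exp_affine_le_eq_cdf hZ hs c hε ▸ cdf_gaussianReal_pos 0 one_ne_zero _
  have hp : 0 < (ℙ {ω | X ω ≤ 1}).toReal :=
    ENNReal.toReal_pos (measure_le_pos_of_identDistrib_mul_one_add hident hindep hA_nonneg
      (fun x hx => (ENNReal.toReal_pos_iff.mp (hA_pos x hx)).1) one_pos).ne' (measure_ne_top _ _)
  have hlimit : -1 / (2 * s ^ 2) = -1 / (2 * σ ^ 2 * τ) := by
    rw [mul_pow, sq_sqrt hτ.le, mul_assoc]
  rw [← hlimit]
  refine tendsto_log_div_of_le_of_le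
    (tendsto_log_const_mul_div (tendsto_log_measure_exp_affine_le_div_sq hZ hs c two_pos)
      ?_ tendsto_log_sq_nhdsGT_zero hp)
    (by simpa using tendsto_log_measure_exp_affine_le_div_sq hZ hs c one_pos) ?_
    (tendsto_log_sq_nhdsGT_zero.eventually_gt_atTop 0) ?_
    (Eventually.of_forall fun ε => ENNReal.toReal_mono (measure_ne_top _ _)
      (measure_le_le_of_identDistrib_mul_one_add hident hA_nonneg hXpos ε))
  all_goals filter_upwards [self_mem_nhdsWithin] with ε (hε : 0 < ε)
  · exact hA_pos _ (by positivity)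
  · exact mul_pos hp (hA_pos _ (by positivity))
  · have h := ENNReal.toReal_mono (measure_ne_top _ _)
      (measure_mul_measure_le_of_identDistrib_mul_one_add hident hindep hA_nonneg zero_le_one ε)
    rwa [ENNReal.toReal_mul, one_add_one_eq_two, mul_comm] at h

/-- Left-tail asymptotics of the stationary solution of `X∞ = A(1+X∞)`:
`lim_{ε→0⁺} log P(X∞ ≤ ε) / (log ε)² = -1/(2σ²τ)`. -/
theorem stmt5 {Ω : Type*} [MeasureSpace Ω] [IsProbabilityMeasure (ℙ : Measure Ω)]
    (σ τ m : ℝ) (hσ : 0 < σ) (hτ : 0 < τ) (hm : m < σ ^ 2 / 2)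
    (Z : Ω → ℝ) (hZ : Measure.map Z ℙ = gaussianReal 0 1)
    (A X : Ω → ℝ)
    (hA : ∀ ω, A ω = Real.exp (σ * Real.sqrt τ * Z ω + (m - σ ^ 2 / 2) * τ))
    (hXpos : ∀ ω, 0 ≤ X ω) (hXmeas : Measurable X)
    (hindep : IndepFun A X ℙ)
    (hfix : Measure.map X ℙ = Measure.map (fun ω => A ω * (1 + X ω)) ℙ) :
    Filter.Tendsto
      (fun ε : ℝ => Real.log (ℙ {ω | X ω ≤ ε}).toReal / (Real.log ε) ^ 2)
      (nhdsWithin 0 (Set.Ioi 0)) (nhds (-1 / (2 * σ ^ 2 * τ))) :=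
  stmt5_general σ τ m hσ hτ Z hZ A X hA hXpos hXmeas hindep hfix
end

section
/- If m < 0, then τ Σ_{i=1}^{∞} exp(σ W_{t_{i-1}} + (m - σ²/2) t_{i-1}) converges in L¹ to ∫₀^∞ exp(σ W_t + (m - σ²/2) t) dt as τ → 0, where t_i = iτ. -/
open MeasureTheory ProbabilityTheory Real

/-- A standard Brownian motion on a probability space: starts at `0`, has
continuous paths, Gaussian increments `W_t - W_s ~ N(0, t-s)`, and independent
increments over disjoint ordered time intervals. -/
def IsStdBrownianMotion {Ω : Type*} [MeasureSpace Ω] (W : ℝ → Ω → ℝ) : Prop :=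
  (∀ ω, W 0 ω = 0) ∧
  (∀ ω, Continuous fun t => W t ω) ∧
  (∀ t, Measurable (W t)) ∧
  (∀ s t : ℝ, 0 ≤ s → s ≤ t →
    Measure.map (fun ω => W t ω - W s ω) ℙ
      = gaussianReal 0 (Real.toNNReal (t - s))) ∧
  (∀ n : ℕ, ∀ t : ℕ → ℝ, Monotone t → 0 ≤ t 0 →
    iIndepFun
      (fun i : Fin n => fun ω => W (t (i + 1)) ω - W (t i) ω) ℙ)

open Set Filter Topology
open scoped ENNReal NNReal

/-!
Write `X t = exp (σ W_t + (m - σ²/2) t)`, so that `𝔼 X t = exp (m t)`. Pathwise, the error of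
the left Riemann sum with step `τ` is at most `∑ᵢ ∫_{iτ}^{(i+1)τ} |X (iτ) - X t| dt`. For `s ≤ t`,
`X t = X s · exp (σ (W_t - W_s) + (m - σ²/2)(t - s))` with independent factors, and Cauchy–Schwarz
applied to the Gaussian factor, followed by convexity of `exp`, gives
`𝔼 |X s - X t| ≤ exp (m s) √(K (t - s))` for `t - s ≤ 1`, where `K = exp (2m + σ²) - 1 - 2m`.
Summing the geometric series bounds the `L¹` error by `√(K τ) · τ / (1 - exp (m τ)) = O(√τ)`.
-/

lemma exp_sub_two_exp_add_one_le (a b : ℝ) {u : ℝ} (hu0 : 0 ≤ u) (hu1 : u ≤ 1) :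
    exp (a * u) - 2 * exp (b * u) + 1 ≤ (exp a - 1 - 2 * b) * u := by
  have hchord := convexOn_exp.2 (mem_univ 0) (mem_univ a) (sub_nonneg.2 hu1) hu0 (by ring)
  simp only [smul_eq_mul, mul_zero, zero_add, exp_zero, mul_one, mul_comm u a] at hchord
  linarith [add_one_le_exp (b * u)]

lemma hasSum_exp_mul_natCast_mul {m τ : ℝ} (hmτ : m * τ < 0) :
    HasSum (fun i : ℕ => exp (m * (i * τ))) (1 - exp (m * τ))⁻¹ := by
  convert hasSum_geometric_of_lt_one (exp_nonneg (m * τ)) (exp_lt_one_iff.2 hmτ) using 1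
  ext i
  rw [← exp_nat_mul]
  ring_nf

lemma div_one_sub_exp_mul_le {m τ : ℝ} (hm : m < 0) (hτ : 0 < τ) :
    τ / (1 - exp (m * τ)) ≤ (1 - m * τ) / -m := by
  have hmτ : m * τ < 0 := mul_neg_of_neg_of_pos hm hτ
  have hinv : exp (m * τ) * exp (-(m * τ)) = 1 := by rw [← exp_add, add_neg_cancel, exp_zero]
  rw [div_le_div_iff₀ (sub_pos.2 (exp_lt_one_iff.2 hmτ)) (neg_pos.2 hm)]
  nlinarith [hinv, add_one_le_exp (-(m * τ)), exp_pos (m * τ)]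

lemma iUnion_Ioc_nat_mul {τ : ℝ} (hτ : 0 < τ) :
    ⋃ i : ℕ, Ioc (i * τ) ((i + 1) * τ) = Ioi 0 := by
  refine Subset.antisymm
    (iUnion_subset fun i t ht => (by positivity : (0 : ℝ) ≤ i * τ).trans_lt ht.1) fun t ht => ?_
  obtain ⟨n, hn⟩ := mem_iUnion.1 ((iUnion_Ioc_zsmul hτ).ge (mem_univ t))
  have hn0 : 0 ≤ n := by
    have h : (0 : ℝ) < (n + 1) * τ := by simpa [zsmul_eq_mul] using (mem_Ioi.1 ht).trans_le hn.2
    have : (0 : ℤ) < n + 1 := by exact_mod_cast pos_of_mul_pos_left h hτ.le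
    omega
  lift n to ℕ using hn0
  exact mem_iUnion.2 ⟨n, by simpa [zsmul_eq_mul] using hn⟩

lemma pairwise_disjoint_Ioc_nat_mul (τ : ℝ) :
    Pairwise (Function.onFun Disjoint fun i : ℕ => Ioc (i * τ) ((i + 1) * τ)) :=
  fun i j hij => by
    simpa [zsmul_eq_mul] using
      pairwise_disjoint_Ioc_add_zsmul (0 : ℝ) τ (Nat.cast_injective.ne hij : (i : ℤ) ≠ j)

lemma enorm_riemannSum_sub_integral_le {g : ℝ → ℝ} {τ : ℝ} (hτ : 0 < τ)
    (hsum : Summable fun i : ℕ => g (i * τ)) (hg : IntegrableOn g (Ioi 0)) :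
    ‖τ * ∑' i : ℕ, g (i * τ) - ∫ t in Ioi 0, g t‖ₑ
      ≤ ∑' i : ℕ, ∫⁻ t in Ioc (i * τ) ((i + 1) * τ), ‖g (i * τ) - g t‖ₑ := by
  have hgi : ∀ i : ℕ, IntegrableOn g (Ioc (i * τ) ((i + 1) * τ)) := fun i =>
    hg.mono_set ((subset_iUnion _ i).trans (iUnion_Ioc_nat_mul hτ).le)
  have hpieces :
      HasSum (fun i : ℕ => ∫ t in Ioc (i * τ) ((i + 1) * τ), g t) (∫ t in Ioi 0, g t) := by
    rw [← iUnion_Ioc_nat_mul hτ] at hg ⊢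
    exact hasSum_integral_iUnion (fun _ => measurableSet_Ioc) (pairwise_disjoint_Ioc_nat_mul τ) hg
  have hlocal : ∀ i : ℕ, ∫ t in Ioc (i * τ) ((i + 1) * τ), (g (i * τ) - g t)
      = τ * g (i * τ) - ∫ t in Ioc (i * τ) ((i + 1) * τ), g t := fun i => by
    rw [integral_sub (integrable_const _) (hgi i), setIntegral_const,
      measureReal_def, Real.volume_Ioc, ENNReal.toReal_ofReal (by nlinarith), smul_eq_mul]
    ring_nf
  rw [← ((hsum.hasSum.mul_left τ).sub hpieces).tsum_eq]
  simp_rw [← hlocal]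
  exact enorm_tsum_le_tsum_enorm.trans
    (ENNReal.tsum_le_tsum fun i => enorm_integral_le_lintegral_enorm _)

lemma ae_summable_of_tsum_lintegral_enorm_ne_top {α E : Type*} [MeasurableSpace α]
    {μ : Measure α} [NormedAddCommGroup E] [CompleteSpace E] {f : ℕ → α → E}
    (hf : ∀ i, AEStronglyMeasurable (f i) μ) (h : ∑' i, ∫⁻ a, ‖f i a‖ₑ ∂μ ≠ ∞) :
    ∀ᵐ a ∂μ, Summable fun i => f i a := by
  rw [← lintegral_tsum fun i => (hf i).enorm] at h
  filter_upwards [ae_lt_top' (AEMeasurable.tsum fun i => (hf i).enorm) h] with a ha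
  exact Summable.of_norm (tsum_enorm_ne_top_iff_summable_norm.1 ha.ne)

lemma ae_integrable_of_lintegral_lintegral_enorm_ne_top {α β E : Type*} [MeasurableSpace α]
    [MeasurableSpace β] {μ : Measure α} {ν : Measure β} [SFinite μ] [SFinite ν]
    [NormedAddCommGroup E] {F : α × β → E} (hF : AEStronglyMeasurable F (μ.prod ν))
    (h : ∫⁻ a, ∫⁻ b, ‖F (a, b)‖ₑ ∂ν ∂μ ≠ ∞) :
    ∀ᵐ a ∂μ, Integrable (fun b => F (a, b)) ν :=
  Integrable.prod_right_ae
    ⟨hF, by rw [HasFiniteIntegral, lintegral_prod _ hF.enorm]; exact h.lt_top⟩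

lemma integral_abs_le_of_lintegral_enorm_le {α : Type*} [MeasurableSpace α] {μ : Measure α}
    {f : α → ℝ} {B : ℝ} (hB : 0 ≤ B) (h : ∫⁻ a, ‖f a‖ₑ ∂μ ≤ ENNReal.ofReal B) :
    ∫ a, |f a| ∂μ ≤ B :=
  (le_abs_self _).trans <| (norm_integral_le_lintegral_norm fun a => |f a|).trans <|
    ENNReal.toReal_le_of_le_ofReal hB (by simpa [Real.enorm_eq_ofReal_abs] using h)

lemma lintegral_enorm_exp_sub_one_gaussianReal_le (μ : ℝ) (v : ℝ≥0) :
    ∫⁻ x, ‖exp x - 1‖ₑ ∂gaussianReal μ v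
      ≤ ENNReal.ofReal (√(exp (2 * μ + 2 * v) - 2 * exp (μ + v / 2) + 1)) := by
  have hmgf (t : ℝ) : ∫ x, exp (t * x) ∂gaussianReal μ v = exp (μ * t + v * t ^ 2 / 2) :=
    congrFun mgf_fun_id_gaussianReal t
  have hexpand : (fun x => (exp x - 1) ^ 2) = fun x => exp (2 * x) - 2 * exp (1 * x) + 1 := by
    ext x; rw [one_mul, two_mul, exp_add]; ring
  have h2 := integrable_exp_mul_gaussianReal (μ := μ) (v := v) 2
  have h1 := (integrable_exp_mul_gaussianReal (μ := μ) (v := v) 1).const_mul 2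
  have hint : Integrable (fun x => (exp x - 1) ^ 2) (gaussianReal μ v) := by
    rw [hexpand]
    exact (h2.sub h1).add (integrable_const 1)
  have hsecond : ∫ x, (exp x - 1) ^ 2 ∂gaussianReal μ v
      = exp (2 * μ + 2 * v) - 2 * exp (μ + v / 2) + 1 := by
    rw [hexpand, integral_add (f := fun x => exp (2 * x) - 2 * exp (1 * x)) (h2.sub h1)
      (integrable_const 1), integral_sub h2 h1, integral_const_mul, hmgf, hmgf]
    simp only [integral_const, probReal_univ, smul_eq_mul, one_mul]
    ring_nf
  have hY : MemLp (fun x => exp x - 1) 2 (gaussianReal μ v) :=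
    (memLp_two_iff_integrable_sq (by fun_prop)).2 hint
  calc ∫⁻ x, ‖exp x - 1‖ₑ ∂gaussianReal μ v
        = eLpNorm (fun x => exp x - 1) 1 (gaussianReal μ v) :=
        eLpNorm_one_eq_lintegral_enorm.symm
    _ ≤ eLpNorm (fun x => exp x - 1) 2 (gaussianReal μ v) :=
        eLpNorm_le_eLpNorm_of_exponent_le (by norm_num) hY.1
    _ = _ := by
        rw [hY.eLpNorm_eq_integral_rpow_norm (by norm_num) (by norm_num), ← hsecond,
          sqrt_eq_rpow]
        norm_num

namespace IsStdBrownianMotion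

variable {Ω : Type*} [MeasureSpace Ω] {W : ℝ → Ω → ℝ}

lemma measurable_uncurry_swap (hW : IsStdBrownianMotion W) :
    Measurable fun p : Ω × ℝ => W p.2 p.1 :=
  (measurable_uncurry_of_continuous_of_measurable hW.2.1 hW.2.2.1).comp measurable_swap

lemma map_eq_gaussianReal (hW : IsStdBrownianMotion W) {t : ℝ} (ht : 0 ≤ t) :
    Measure.map (W t) ℙ = gaussianReal 0 t.toNNReal := by
  simpa [hW.1] using hW.2.2.2.1 0 t le_rfl ht

lemma indepFun_increment (hW : IsStdBrownianMotion W) {s t : ℝ} (hs : 0 ≤ s) (hst : s ≤ t) :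
    IndepFun (W s) (fun ω => W t ω - W s ω) ℙ := by
  let times : ℕ → ℝ := fun k => if k = 0 then 0 else if k = 1 then s else t
  have hmono : Monotone times := monotone_nat_of_le_succ fun
    | 0 => by simpa [times] using hs
    | 1 => by simpa [times] using hst
    | k + 2 => by simp [times]
  have h := (hW.2.2.2.2 2 times hmono le_rfl).indepFun (i := 0) (j := 1) (by decide)
  simpa [times, hW.1] using h

end IsStdBrownianMotion

section GeometricBM

variable {Ω : Type*} [MeasureSpace Ω] {W : ℝ → Ω → ℝ}

noncomputable def geometricBM (W : ℝ → Ω → ℝ) (σ m t : ℝ) (ω : Ω) : ℝ :=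
  exp (σ * W t ω + (m - σ ^ 2 / 2) * t)

lemma IsStdBrownianMotion.measurable_geometricBM (hW : IsStdBrownianMotion W) (σ m : ℝ) :
    Measurable fun p : Ω × ℝ => geometricBM W σ m p.2 p.1 :=
  ((hW.measurable_uncurry_swap.const_mul σ).add (measurable_snd.const_mul _)).exp

lemma IsStdBrownianMotion.lintegral_enorm_exp_increment_sub_one_le (hW : IsStdBrownianMotion W)
    (σ m : ℝ) {s t : ℝ} (hs : 0 ≤ s) (hst : s ≤ t) (hts : t - s ≤ 1) :
    ∫⁻ ω, ‖exp (σ * (W t ω - W s ω) + (m - σ ^ 2 / 2) * (t - s)) - 1‖ₑ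
      ≤ ENNReal.ofReal √((exp (2 * m + σ ^ 2) - 1 - 2 * m) * (t - s)) := by
  have hu : 0 ≤ t - s := sub_nonneg.2 hst
  have hlaw : Measure.map (fun ω => σ * (W t ω - W s ω) + (m - σ ^ 2 / 2) * (t - s)) ℙ
      = gaussianReal ((m - σ ^ 2 / 2) * (t - s)) (σ ^ 2 * (t - s)).toNNReal := by
    have hY : Measurable fun ω => W t ω - W s ω := (hW.2.2.1 t).sub (hW.2.2.1 s)
    rw [← Function.comp_def (· + (m - σ ^ 2 / 2) * (t - s)), ← Function.comp_def (σ * ·),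
      ← Measure.map_map (measurable_add_const _) ((measurable_const_mul σ).comp hY),
      ← Measure.map_map (measurable_const_mul σ) hY, hW.2.2.2.1 s t hs hst,
      gaussianReal_map_const_mul, gaussianReal_map_add_const]
    congr 1
    · ring
    · ext; simp [hu, mul_nonneg (sq_nonneg σ) hu]
  have hmeas : AEMeasurable (fun ω => σ * (W t ω - W s ω) + (m - σ ^ 2 / 2) * (t - s)) ℙ :=
    (((hW.2.2.1 t).sub (hW.2.2.1 s)).const_mul σ |>.add_const _).aemeasurable
  rw [← lintegral_map' (f := fun x => ‖exp x - 1‖ₑ) (by fun_prop) hmeas, hlaw]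
  refine (lintegral_enorm_exp_sub_one_gaussianReal_le _ _).trans
    (ENNReal.ofReal_le_ofReal (sqrt_le_sqrt ?_))
  have hv : ((σ ^ 2 * (t - s)).toNNReal : ℝ) = σ ^ 2 * (t - s) :=
    Real.coe_toNNReal _ (mul_nonneg (sq_nonneg σ) hu)
  convert exp_sub_two_exp_add_one_le (2 * m + σ ^ 2) m hu hts using 3 <;> rw [hv] <;> ring_nf

variable [IsProbabilityMeasure (ℙ : Measure Ω)]

lemma IsStdBrownianMotion.lintegral_enorm_geometricBM (hW : IsStdBrownianMotion W) (σ m : ℝ)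
    {t : ℝ} (ht : 0 ≤ t) :
    ∫⁻ ω, ‖geometricBM W σ m t ω‖ₑ = ENNReal.ofReal (exp (m * t)) := by
  have hmgf := mgf_gaussianReal (hW.map_eq_gaussianReal ht) σ
  have hint : Integrable (fun ω => exp (σ * W t ω)) ℙ := mgf_pos_iff.1 (hmgf ▸ exp_pos _)
  have hsplit : geometricBM W σ m t = fun ω => exp (σ * W t ω) * exp ((m - σ ^ 2 / 2) * t) :=
    funext fun ω => exp_add _ _
  rw [hsplit, ← ofReal_integral_norm_eq_lintegral_enorm (hint.mul_const _)]
  simp only [Real.norm_eq_abs, abs_mul, abs_exp, integral_mul_const]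
  rw [show ∫ ω, exp (σ * W t ω) = mgf (W t) ℙ σ from rfl, hmgf, ← exp_add,
    Real.coe_toNNReal t ht]
  ring_nf

lemma IsStdBrownianMotion.lintegral_enorm_geometricBM_sub_le (hW : IsStdBrownianMotion W)
    (σ m : ℝ) {s t : ℝ} (hs : 0 ≤ s) (hst : s ≤ t) (hts : t - s ≤ 1) :
    ∫⁻ ω, ‖geometricBM W σ m s ω - geometricBM W σ m t ω‖ₑ
      ≤ ENNReal.ofReal (exp (m * s))
        * ENNReal.ofReal √((exp (2 * m + σ ^ 2) - 1 - 2 * m) * (t - s)) := by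
  have hfactor (ω : Ω) : geometricBM W σ m s ω - geometricBM W σ m t ω
      = -(geometricBM W σ m s ω
          * (exp (σ * (W t ω - W s ω) + (m - σ ^ 2 / 2) * (t - s)) - 1)) := by
    simp only [geometricBM, mul_sub, mul_one, ← exp_add]
    ring_nf
  have hindep := (hW.indepFun_increment hs hst).comp
    (φ := fun x => ‖exp (σ * x + (m - σ ^ 2 / 2) * s)‖ₑ)
    (ψ := fun y => ‖exp (σ * y + (m - σ ^ 2 / 2) * (t - s)) - 1‖ₑ) (by fun_prop) (by fun_prop)
  simp_rw [hfactor, enorm_neg, enorm_mul]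
  rw [lintegral_mul_eq_lintegral_mul_lintegral_of_indepFun''
    (f := fun ω => ‖geometricBM W σ m s ω‖ₑ)
    (g := fun ω => ‖exp (σ * (W t ω - W s ω) + (m - σ ^ 2 / 2) * (t - s)) - 1‖ₑ)
    ((hW.measurable_geometricBM σ m).comp measurable_prodMk_right).enorm.aemeasurable
    (by have := hW.2.2.1; fun_prop) hindep, hW.lintegral_enorm_geometricBM σ m hs]
  gcongr
  exact hW.lintegral_enorm_exp_increment_sub_one_le σ m hs hst hts

lemma IsStdBrownianMotion.lintegral_enorm_riemannSum_sub_integral_le (hW : IsStdBrownianMotion W)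
    (σ : ℝ) {m τ : ℝ} (hm : m < 0) (hτ : 0 < τ) (hτ1 : τ ≤ 1) :
    ∫⁻ ω, ‖τ * ∑' i : ℕ, geometricBM W σ m (i * τ) ω - ∫ t in Ioi 0, geometricBM W σ m t ω‖ₑ
      ≤ ENNReal.ofReal (√((exp (2 * m + σ ^ 2) - 1 - 2 * m) * τ) * (τ * (1 - exp (m * τ))⁻¹)) := by
  set X := geometricBM W σ m
  set K := exp (2 * m + σ ^ 2) - 1 - 2 * m
  have hK : 0 ≤ K := by nlinarith [add_one_le_exp (2 * m + σ ^ 2), sq_nonneg σ]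
  have hX := hW.measurable_geometricBM σ m
  have hXt (t : ℝ) : Measurable (X t) := hX.comp measurable_prodMk_right
  have hgeom := hasSum_exp_mul_natCast_mul (mul_neg_of_neg_of_pos hm hτ)
  have hsum : ∀ᵐ ω, Summable fun i : ℕ => X (i * τ) ω := by
    refine ae_summable_of_tsum_lintegral_enorm_ne_top (fun i => (hXt _).aestronglyMeasurable) ?_
    rw [tsum_congr fun i : ℕ => hW.lintegral_enorm_geometricBM σ m (by positivity),
      ← ENNReal.ofReal_tsum_of_nonneg (fun _ => exp_nonneg _) hgeom.summable]
    exact ENNReal.ofReal_ne_top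
  have hint : ∀ᵐ ω, IntegrableOn (fun t => X t ω) (Ioi 0) := by
    refine ae_integrable_of_lintegral_lintegral_enorm_ne_top (F := fun p => X p.2 p.1)
      hX.aestronglyMeasurable ?_
    rw [lintegral_lintegral_swap hX.enorm.aemeasurable, setLIntegral_congr_fun measurableSet_Ioi
      fun t ht => hW.lintegral_enorm_geometricBM σ m (le_of_lt ht)]
    exact ((integrableOn_exp_mul_Ioi hm 0).lintegral_lt_top).ne
  have hdiff (i : ℕ) : Measurable fun p : Ω × ℝ => ‖X (i * τ) p.1 - X p.2 p.1‖ₑ :=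
    (((hXt _).comp measurable_fst).sub hX).enorm
  calc _ ≤ ∫⁻ ω, ∑' i : ℕ, ∫⁻ t in Ioc (i * τ) ((i + 1) * τ), ‖X (i * τ) ω - X t ω‖ₑ :=
        lintegral_mono_ae <| by
          filter_upwards [hsum, hint] with ω h1 h2 using enorm_riemannSum_sub_integral_le hτ h1 h2
    _ = ∑' i : ℕ, ∫⁻ t in Ioc (i * τ) ((i + 1) * τ), ∫⁻ ω, ‖X (i * τ) ω - X t ω‖ₑ := by
        rw [lintegral_tsum fun i => (hdiff i).lintegral_prod_right'.aemeasurable]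
        exact tsum_congr fun i => lintegral_lintegral_swap (hdiff i).aemeasurable
    _ ≤ ∑' i : ℕ, ∫⁻ t in Ioc (i * τ) ((i + 1) * τ),
          ENNReal.ofReal (exp (m * (i * τ))) * ENNReal.ofReal √(K * τ) := by
        refine ENNReal.tsum_le_tsum fun i => setLIntegral_mono (by fun_prop) fun t ht => ?_
        refine (hW.lintegral_enorm_geometricBM_sub_le σ m (by positivity) ht.1.le
          (by linarith [ht.2])).trans ?_
        gcongr
        linarith [ht.2]
    _ = ∑' i : ℕ, ENNReal.ofReal (√(K * τ) * τ * exp (m * (i * τ))) := by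
        refine tsum_congr fun i => ?_
        rw [setLIntegral_const, Real.volume_Ioc, ← ENNReal.ofReal_mul (exp_nonneg _),
          ← ENNReal.ofReal_mul (by positivity)]
        congr 1
        ring
    _ = _ := by
        rw [← ENNReal.ofReal_tsum_of_nonneg (fun _ => by positivity) (hgeom.mul_left _).summable,
          (hgeom.mul_left _).tsum_eq, mul_assoc]

end GeometricBM

/-- If `m < 0`, the Riemann sum `τ ∑_{i=1}^{∞} exp(σ W_{t_{i-1}} + (m-σ²/2) t_{i-1})`
converges in `L¹` to `∫₀^∞ exp(σ W_t + (m-σ²/2) t) dt` as `τ → 0⁺`. -/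
theorem stmt8 {Ω : Type*} [MeasureSpace Ω] [IsProbabilityMeasure (ℙ : Measure Ω)]
    (W : ℝ → Ω → ℝ) (hW : IsStdBrownianMotion W)
    (σ m : ℝ) (hm : m < 0) :
    Filter.Tendsto
      (fun τ : ℝ => ∫ ω,
        |τ * ∑' i : ℕ,
            Real.exp (σ * W ((i : ℝ) * τ) ω + (m - σ ^ 2 / 2) * ((i : ℝ) * τ))
          - ∫ t in Set.Ioi (0 : ℝ), Real.exp (σ * W t ω + (m - σ ^ 2 / 2) * t)| ∂ℙ)
      (nhdsWithin 0 (Set.Ioi 0)) (nhds 0) := by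
  set K := exp (2 * m + σ ^ 2) - 1 - 2 * m
  have hbound : ∀ τ ∈ Ioc (0 : ℝ) 1,
      ∫ ω, |τ * ∑' i : ℕ, geometricBM W σ m (i * τ) ω - ∫ t in Ioi 0, geometricBM W σ m t ω|
        ≤ √(K * τ) * ((1 - m * τ) / -m) := by
    rintro τ ⟨hτ, hτ1⟩
    refine integral_abs_le_of_lintegral_enorm_le
      (mul_nonneg (sqrt_nonneg _) (div_nonneg (by nlinarith) (by linarith)))
      ((hW.lintegral_enorm_riemannSum_sub_integral_le σ hm hτ hτ1).trans ?_)
    gcongr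
    exact div_one_sub_exp_mul_le hm hτ
  have hlim : Tendsto (fun τ => √(K * τ) * ((1 - m * τ) / -m)) (𝓝[>] 0) (𝓝 0) := by
    have hcont : Continuous fun τ => √(K * τ) * ((1 - m * τ) / -m) := by fun_prop
    simpa using (hcont.tendsto 0).mono_left nhdsWithin_le_nhds
  refine squeeze_zero' (Eventually.of_forall fun τ => integral_nonneg fun ω => abs_nonneg _)
    ?_ hlim
  filter_upwards [Ioc_mem_nhdsGT zero_lt_one] with τ hτ using hbound τ hτ
end

section
/- For the geometrically stopped sum X_N (N geometric with parameter p ∈ (0,1), independent of W), lim_{ε→0} log P(X_N ≤ ε) / (log ε)² = -1/(2σ²τ). -/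
open MeasureTheory ProbabilityTheory Real

/-!
The first summand `A = exp (σ W_τ + (m - σ²/2) τ)` is log-normal. All summands are positive and
`N ≥ 1` almost surely, so `{X_N ≤ ε} ⊆ {A ≤ ε}`; conversely `{N = 1} ∩ {A ≤ ε} ⊆ {X_N ≤ ε}` with
`N` independent of `A`. Hence `p P(A ≤ ε) ≤ P(X_N ≤ ε) ≤ P(A ≤ ε)`, and the factor `p` is lost
after dividing the logarithm by `(log ε)²`. Finally `P(A ≤ ε) = Φ(log ε)` for the distribution
function `Φ` of a Gaussian of variance `σ²τ`, and `log Φ(y) ~ -y² / (2σ²τ)` as `y → -∞`: the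
Chernoff bound gives the upper estimate, the density on `[y - 1, y]` the lower one.
-/

open Filter Set Finset
open scoped NNReal ENNReal Topology

lemma tendsto_log_div_of_mul_le_of_le {ι : Type*} {l : Filter ι} {f g h : ι → ℝ} {c L : ℝ}
    (hc : 0 < c) (hh : Tendsto h l atTop) (hg : ∀ᶠ x in l, 0 < g x)
    (hlow : ∀ᶠ x in l, c * g x ≤ f x) (hup : ∀ᶠ x in l, f x ≤ g x)
    (hlim : Tendsto (fun x => log (g x) / h x) l (𝓝 L)) :
    Tendsto (fun x => log (f x) / h x) l (𝓝 L) := by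
  have hlim' : Tendsto (fun x => log c / h x + log (g x) / h x) l (𝓝 L) := by
    simpa using (tendsto_const_nhds.div_atTop hh).add hlim
  refine tendsto_of_tendsto_of_tendsto_of_le_of_le' hlim' hlim ?_ ?_
  · filter_upwards [hg, hlow, hh.eventually_gt_atTop 0] with x hgx hfx hhx
    rw [← add_div, ← log_mul hc.ne' hgx.ne']
    gcongr
  · filter_upwards [hg, hlow, hup, hh.eventually_gt_atTop 0] with x hgx hfx hfg hhx
    gcongr
    exact lt_of_lt_of_le (by positivity) hfx

lemma tendsto_sub_sub_sq_div_sq_atBot (b a d : ℝ) :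
    Tendsto (fun y => (b - (y - a) ^ 2 / d) / y ^ 2) atBot (𝓝 (-1 / d)) := by
  have hcont : Tendsto (fun u : ℝ => b * u ^ 2 - (1 - a * u) ^ 2 / d) (𝓝 0) (𝓝 (-1 / d)) := by
    have := ((by fun_prop : Continuous fun u : ℝ => b * u ^ 2 - (1 - a * u) ^ 2 / d)).tendsto 0
    simpa [neg_div] using this
  refine (hcont.comp tendsto_inv_atBot_zero).congr' ?_
  filter_upwards [eventually_ne_atBot 0] with y hy
  simp only [Function.comp_apply]
  field_simp

section GaussianTail

variable (μ : ℝ) {v : ℝ≥0}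

lemma gaussianReal_real_Iic_pos (hv : v ≠ 0) (y : ℝ) : 0 < (gaussianReal μ v).real (Iic y) :=
  ENNReal.toReal_pos (fun h => by simpa using gaussianReal_absolutelyContinuous' μ hv h)
    (measure_ne_top _ _)

lemma gaussianReal_real_Iic_le_exp (hv : v ≠ 0) {y : ℝ} (hy : y ≤ μ) :
    (gaussianReal μ v).real (Iic y) ≤ exp (-(y - μ) ^ 2 / (2 * v)) := by
  have hv' : (0 : ℝ) < v := by positivity
  have ht : (y - μ) / v ≤ 0 := div_nonpos_of_nonpos_of_nonneg (by linarith) hv'.le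
  have h := measure_le_le_exp_mul_mgf (X := id) (μ := gaussianReal μ v) y ht
    (integrable_exp_mul_gaussianReal _)
  rw [mgf_id_gaussianReal, ← exp_add] at h
  refine h.trans_eq (congrArg exp ?_)
  field_simp
  ring

lemma exp_le_gaussianReal_real_Iic (hv : v ≠ 0) {y : ℝ} (hy : y ≤ μ) :
    (√(2 * π * v))⁻¹ * exp (-(y - 1 - μ) ^ 2 / (2 * v)) ≤ (gaussianReal μ v).real (Iic y) := by
  have hpdf : ∀ x ∈ Icc (y - 1) y,
      (√(2 * π * v))⁻¹ * exp (-(y - 1 - μ) ^ 2 / (2 * v)) ≤ gaussianPDFReal μ v x := by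
    rintro x ⟨hx₁, hx₂⟩
    rw [gaussianPDFReal]
    gcongr _ * exp (-?_ / _)
    nlinarith
  rw [measureReal_def, gaussianReal_apply_eq_integral μ hv,
    ENNReal.toReal_ofReal (setIntegral_nonneg measurableSet_Iic
      fun x _ => gaussianPDFReal_nonneg μ v x)]
  calc (√(2 * π * v))⁻¹ * exp (-(y - 1 - μ) ^ 2 / (2 * v))
      = (√(2 * π * v))⁻¹ * exp (-(y - 1 - μ) ^ 2 / (2 * v)) * volume.real (Icc (y - 1) y) := by
        simp
    _ ≤ ∫ x in Icc (y - 1) y, gaussianPDFReal μ v x :=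
        setIntegral_ge_of_const_le_real measurableSet_Icc (by simp) hpdf
          (integrable_gaussianPDFReal μ v).integrableOn
    _ ≤ ∫ x in Iic y, gaussianPDFReal μ v x :=
        setIntegral_mono_set (integrable_gaussianPDFReal μ v).integrableOn
          (ae_of_all _ (gaussianPDFReal_nonneg μ v)) Icc_subset_Iic_self.eventuallyLE

theorem tendsto_log_gaussianReal_real_Iic_div_sq (hv : v ≠ 0) :
    Tendsto (fun y => log ((gaussianReal μ v).real (Iic y)) / y ^ 2) atBot
      (𝓝 (-1 / (2 * v))) := by
  set C : ℝ := (√(2 * π * v))⁻¹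
  have hC : 0 < C := by positivity
  refine tendsto_of_tendsto_of_tendsto_of_le_of_le'
    (tendsto_sub_sub_sq_div_sq_atBot (log C) (1 + μ) (2 * v))
    (tendsto_sub_sub_sq_div_sq_atBot 0 μ (2 * v)) ?_ ?_
  all_goals
    filter_upwards [eventually_le_atBot μ] with y hy
    gcongr
  · have := log_le_log (by positivity) (exp_le_gaussianReal_real_Iic μ hv hy)
    rwa [log_mul hC.ne' (exp_pos _).ne', log_exp, neg_div, ← sub_eq_add_neg, sub_sub] at this
  · have := log_le_log (gaussianReal_real_Iic_pos μ hv y) (gaussianReal_real_Iic_le_exp μ hv hy)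
    rwa [log_exp, neg_div, ← zero_sub] at this

end GaussianTail

section StoppedSum

variable {Ω : Type*} [MeasurableSpace Ω] {μ : Measure Ω} {N : Ω → ℕ} {a : ℕ → Ω → ℝ}

lemma ae_pos_of_measure_eq_geometric [IsProbabilityMeasure μ] (hN : Measurable N) {p : ℝ}
    (hp₀ : 0 < p) (hp₁ : p ≤ 1)
    (hlaw : ∀ k : ℕ, 1 ≤ k → μ {ω | N ω = k} = ENNReal.ofReal ((1 - p) ^ (k - 1) * p)) :
    ∀ᵐ ω ∂μ, 0 < N ω := by
  have hgeom : HasSum (fun k : ℕ => (1 - p) ^ k * p) 1 :=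
    hasSum_one_geometricMeasure (p := ⟨p, hp₀.le, hp₁⟩) fun h => hp₀.ne' (congrArg Subtype.val h)
  have hfib : ∀ k : ℕ, MeasurableSet {ω | N ω = k + 1} :=
    fun k => hN (measurableSet_singleton _)
  have hsum : μ (⋃ k : ℕ, {ω | N ω = k + 1}) = 1 := by
    rw [measure_iUnion (fun i j hij => Set.disjoint_left.2 fun ω h₁ h₂ => hij ?_) hfib]
    · simp_rw [hlaw _ (Nat.le_add_left 1 _), Nat.add_sub_cancel]
      rw [← ENNReal.ofReal_tsum_of_nonneg
        (fun k => mul_nonneg (pow_nonneg (sub_nonneg.2 hp₁) _) hp₀.le) hgeom.summable,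
        hgeom.tsum_eq, ENNReal.ofReal_one]
    · simp_all
  filter_upwards [mem_ae_iff.2 ((prob_compl_eq_zero_iff (MeasurableSet.iUnion hfib)).2 hsum)]
    with ω hω
  obtain ⟨k, hk⟩ := Set.mem_iUnion.1 hω
  simp_all

variable [IsFiniteMeasure μ]

lemma measureReal_sum_range_le_le (ha : ∀ i ω, 0 ≤ a i ω) (hN : ∀ᵐ ω ∂μ, 0 < N ω) (ε : ℝ) :
    μ.real {ω | ∑ i ∈ range (N ω), a i ω ≤ ε} ≤ μ.real {ω | a 0 ω ≤ ε} := by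
  refine ENNReal.toReal_mono (measure_ne_top _ _) (measure_mono_ae ?_)
  filter_upwards [hN] with ω hω hle
  exact (single_le_sum (fun i _ => ha i ω) (mem_range.2 hω)).trans hle

lemma measureReal_eq_one_mul_le_le_sum_range (hind : IndepFun N (a 0) μ) (ε : ℝ) :
    μ.real {ω | N ω = 1} * μ.real {ω | a 0 ω ≤ ε}
      ≤ μ.real {ω | ∑ i ∈ range (N ω), a i ω ≤ ε} := by
  have hprod := hind.measure_inter_preimage_eq_mul {1} (Iic ε) (measurableSet_singleton 1)
    measurableSet_Iic
  rw [measureReal_def, measureReal_def, ← ENNReal.toReal_mul]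
  refine ENNReal.toReal_mono (measure_ne_top _ _) (hprod ▸ measure_mono ?_)
  rintro ω ⟨h₁, h₂⟩
  simp_all

end StoppedSum

lemma IsStdBrownianMotion.hasLaw {Ω : Type*} [MeasureSpace Ω] {W : ℝ → Ω → ℝ}
    (hW : IsStdBrownianMotion W) {t : ℝ} (ht : 0 ≤ t) :
    HasLaw (W t) (gaussianReal 0 t.toNNReal) ℙ where
  aemeasurable := (hW.2.2.1 t).aemeasurable
  map_eq := by simpa [hW.1] using hW.2.2.2.1 0 t le_rfl ht

/-- Left-tail asymptotics of the geometrically stopped sum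
`X_N = ∑_{i=1}^{N} exp(σ W_{t_i} + (m-σ²/2)t_i)`:
`lim_{ε→0⁺} log P(X_N ≤ ε) / (log ε)² = -1/(2σ²τ)`. -/
theorem stmt13 {Ω : Type*} [MeasureSpace Ω] [IsProbabilityMeasure (ℙ : Measure Ω)]
    (W : ℝ → Ω → ℝ) (hW : IsStdBrownianMotion W)
    (σ τ m p : ℝ) (hσ : 0 < σ) (hτ : 0 < τ) (hp : p ∈ Set.Ioo (0 : ℝ) 1)
    (N : Ω → ℕ) (hNmeas : Measurable N)
    (hN : ∀ k : ℕ, 1 ≤ k →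
      ℙ {ω | N ω = k} = ENNReal.ofReal ((1 - p) ^ (k - 1) * p))
    (hNindep : IndepFun N (fun ω (i : ℕ) => W ((i : ℝ) * τ) ω) ℙ)
    (XN : Ω → ℝ)
    (hXN : ∀ ω, XN ω = ∑ i ∈ Finset.range (N ω),
      Real.exp (σ * W (((i : ℝ) + 1) * τ) ω
        + (m - σ ^ 2 / 2) * (((i : ℝ) + 1) * τ))) :
    Filter.Tendsto
      (fun ε : ℝ => Real.log (ℙ {ω | XN ω ≤ ε}).toReal / (Real.log ε) ^ 2)
      (nhdsWithin 0 (Set.Ioi 0)) (nhds (-1 / (2 * σ ^ 2 * τ))) := by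
  obtain rfl : XN = _ := funext hXN
  set c := m - σ ^ 2 / 2
  set a : ℕ → Ω → ℝ := fun i ω => exp (σ * W ((i + 1) * τ) ω + c * ((i + 1) * τ))
  have ha₀ : a 0 = fun ω => exp (σ * W τ ω + c * τ) := by simp [a]
  have hlaw := gaussianReal_add_const (gaussianReal_const_mul (hW.hasLaw hτ.le) σ) (c * τ)
  rw [mul_zero, zero_add] at hlaw
  set v : ℝ≥0 := .mk (σ ^ 2) (sq_nonneg σ) * τ.toNNReal
  have hv : (v : ℝ) = σ ^ 2 * τ := by
    rw [NNReal.coe_mul, NNReal.coe_mk, Real.coe_toNNReal _ hτ.le]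
  have hv₀ : v ≠ 0 := by rw [← NNReal.coe_ne_zero, hv]; positivity
  have hA : ∀ ε > 0,
      Measure.real ℙ {ω | a 0 ω ≤ ε} = (gaussianReal (c * τ) v).real (Iic (log ε)) := by
    intro ε hε
    simp only [measureReal_def, ha₀, ← le_log_iff_exp_le hε]
    rw [hlaw.measure_eq measurableSet_Iic]
    rfl
  have hindep : IndepFun N (a 0) ℙ := by
    simpa [ha₀, Function.comp_def] using hNindep.comp measurable_id
      (by fun_prop : Measurable fun g : ℕ → ℝ => exp (σ * g 1 + c * τ))
  have hN₁ : Measure.real ℙ {ω | N ω = 1} = p := by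
    simp [measureReal_def, hN 1 le_rfl, hp.1.le]
  have hNpos := ae_pos_of_measure_eq_geometric hNmeas hp.1 hp.2.le hN
  have hlog : Tendsto log (𝓝[>] 0) atBot := tendsto_log_nhdsGT_zero
  rw [mul_assoc, ← hv]
  refine tendsto_log_div_of_mul_le_of_le hp.1 (by simpa [sq] using hlog.atBot_mul_atBot₀ hlog)
    (f := fun ε => Measure.real ℙ {ω | ∑ i ∈ range (N ω), a i ω ≤ ε})
    (g := fun ε => (gaussianReal (c * τ) v).real (Iic (log ε)))
    (.of_forall fun ε => gaussianReal_real_Iic_pos _ hv₀ _) ?_ ?_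
    ((tendsto_log_gaussianReal_real_Iic_div_sq _ hv₀).comp hlog)
  all_goals filter_upwards [self_mem_nhdsWithin] with ε hε
  · simpa only [hN₁, hA ε hε] using measureReal_eq_one_mul_le_le_sum_range hindep ε
  · simpa only [hA ε hε] using
      measureReal_sum_range_le_le (a := a) (fun i ω => (exp_pos _).le) hNpos ε
end

section
/- Let A be a positive random variable with E[A^k] < 1, and let X∞ ≥ 0 satisfy X∞ = A(1+X∞) in distribution with A independent of X∞ and E[X∞^j] < ∞ for j ≤ k. Then E[X∞^k] = (E[A^k]/(1 − E[A^k])) · Σ_{j=0}^{k-1} C(k,j) E[X∞^j], and consequently E[X∞^k] = Σ over chains 0 = i₀ < i₁ < ⋯ < i_m = k of the product over j=1..m of C(i_j, i_{j-1}) · E[A^{i_j}]/(1 − E[A^{i_j}]). -/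
/-!
Independence and the fixed-point law give `E[X^i] = E[A^i] E[(1+X)^i]`; expanding `(1+X)^i`
binomially and solving for `E[X^i]` (possible as `E[A^i] < 1`) yields the recursion. A
sequence with `m 0 = 1` and `m n = ∑_{j<n} f(j,n) m j` is the sum, over chains
`0 = i₀ < ⋯ < i_m = n`, of the products of `f` along consecutive links: grouping the chains
by their last intermediate index `j` reproduces the recursion.
-/

open MeasureTheory ProbabilityTheory Finset

theorem List.consecutivePairs_append_pair {α : Type*} (l : List α) (a b : α) :
    (l ++ [a, b]).consecutivePairs = (l ++ [a]).consecutivePairs ++ [(a, b)] := by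
  induction l with
  | nil => rfl
  | cons x l ih =>
    cases l with
    | nil => rfl
    | cons y l => simpa [List.consecutivePairs] using ih

theorem Finset.sort_insert_of_forall_lt {α : Type*} [LinearOrder α] {s : Finset α} {b : α}
    (h : ∀ x ∈ s, x < b) : sort (insert b s) = sort s ++ [b] := by
  refine (sortedLT_sort _).pairwise.eq_of_mem_iff ?_ fun a => ?_
  · rw [List.pairwise_append]
    exact ⟨(sortedLT_sort s).pairwise, List.pairwise_singleton _ _, by simpa using h⟩
  · simp [or_comm]

section Chains

variable {α R : Type*} [LinearOrder α] [CommMonoid R]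

noncomputable def chainProd (f : α × α → R) (s : Finset α) : R :=
  ((sort s).consecutivePairs.map f).prod

theorem chainProd_insert_insert (f : α × α → R) {t : Finset α} {a b : α}
    (ht : ∀ x ∈ t, x < a) (hab : a < b) :
    chainProd f (insert b (insert a t)) = chainProd f (insert a t) * f (a, b) := by
  have hb : ∀ x ∈ insert a t, x < b := by
    simpa using ⟨hab, fun x hx => (ht x hx).trans hab⟩
  rw [chainProd, chainProd, sort_insert_of_forall_lt hb, sort_insert_of_forall_lt ht,
    List.append_assoc, List.singleton_append, List.consecutivePairs_append_pair]
  simp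

theorem chainProd_singleton (f : α × α → R) (a : α) : chainProd f {a} = 1 := by
  simp [chainProd, List.consecutivePairs]

end Chains

section ChainSums

variable {R : Type*} [CommSemiring R] (f : ℕ × ℕ → R)

noncomputable def chainSum (j n : ℕ) : R :=
  ∑ T ∈ (Ioo 0 j).powerset, chainProd f (insert 0 (insert n T))

theorem chainSum_zero_self : chainSum f 0 0 = 1 := by
  simp [chainSum, chainProd_singleton]

theorem chainSum_one {n : ℕ} (hn : 0 < n) : chainSum f 1 n = f (0, n) := by
  rw [chainSum, show Ioo 0 1 = ∅ by rfl, powerset_empty, sum_singleton, insert_comm,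
    chainProd_insert_insert f (t := ∅) (by simp) hn, insert_empty, chainProd_singleton, one_mul]

/-- Chains with intermediate indices below `j + 1` either avoid `j`, or have `j` as their
last intermediate index. -/
theorem chainSum_succ {j n : ℕ} (hj : 0 < j) (hjn : j < n) :
    chainSum f (j + 1) n = chainSum f j n + chainSum f j j * f (j, n) := by
  rw [chainSum, Ioo_add_one_right_eq_Ioc, ← Ioo_insert_right hj,
    sum_powerset_insert (by simp), chainSum, chainSum, sum_mul]
  congr 1
  refine sum_congr rfl fun T hT => ?_
  have hT : ∀ x ∈ insert 0 T, x < j := by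
    simpa using ⟨hj, fun x hx => (mem_Ioo.1 (mem_powerset.1 hT hx)).2⟩
  rw [insert_comm 0 n, insert_comm 0 j, chainProd_insert_insert f hT hjn]

theorem chainSum_eq_sum {j n : ℕ} (hj : 0 < j) (hjn : j ≤ n) :
    chainSum f j n = ∑ i ∈ range j, f (i, n) * chainSum f i i := by
  induction j, hj using Nat.le_induction with
  | base => simp [chainSum_one f hjn, chainSum_zero_self]
  | succ j hj ih =>
    rw [chainSum_succ f hj hjn, ih (Nat.le_of_succ_le hjn), sum_range_succ, mul_comm (f _)]

theorem eq_chainSum_of_recursion {m : ℕ → R} {k : ℕ} (h0 : m 0 = 1)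
    (h : ∀ n, 0 < n → n ≤ k → m n = ∑ i ∈ range n, f (i, n) * m i) :
    ∀ n ≤ k, m n = chainSum f n n := by
  intro n
  induction n using Nat.strong_induction_on with
  | _ n ih =>
    intro hnk
    rcases n.eq_zero_or_pos with rfl | hn
    · rw [h0, chainSum_zero_self]
    · rw [h n hn hnk, chainSum_eq_sum f hn le_rfl]
      exact sum_congr rfl fun i hi =>
        congrArg _ (ih i (mem_range.1 hi) ((mem_range.1 hi).le.trans hnk))

end ChainSums

section FixedPoint

variable {Ω : Type*} [MeasurableSpace Ω] {μ : Measure Ω} {A X : Ω → ℝ}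

theorem integral_pow_eq_mul_integral_one_add_pow (hA : Measurable A) (hX : Measurable X)
    (hindep : IndepFun A X μ) (hfix : μ.map X = μ.map (fun ω => A ω * (1 + X ω))) (i : ℕ) :
    μ[fun ω => X ω ^ i] = μ[fun ω => A ω ^ i] * μ[fun ω => (1 + X ω) ^ i] := by
  have hpow : μ[fun ω => X ω ^ i] = ∫ x, x ^ i ∂(μ.map X) :=
    (integral_map (f := fun x => x ^ i) hX.aemeasurable (by fun_prop)).symm
  rw [hpow, hfix, integral_map (f := fun x => x ^ i) (by fun_prop) (by fun_prop)]
  simp only [mul_pow]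
  exact (hindep.comp (measurable_id.pow_const i)
    ((measurable_const.add measurable_id).pow_const i)).integral_mul_eq_mul_integral
    (hA.pow_const i).aestronglyMeasurable (by fun_prop)

theorem integral_one_add_pow {i : ℕ} (hX : ∀ j ≤ i, Integrable (fun ω => X ω ^ j) μ) :
    μ[fun ω => (1 + X ω) ^ i]
      = ∑ j ∈ range (i + 1), (i.choose j : ℝ) * μ[fun ω => X ω ^ j] := by
  simp_rw [add_comm (1 : ℝ), add_pow, one_pow, mul_one]
  rw [integral_finsetSum _ fun j hj => ((hX j (Nat.lt_succ_iff.1 (mem_range.1 hj))).mul_const _)]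
  exact sum_congr rfl fun j _ => by rw [integral_mul_const, mul_comm]

theorem integral_pow_eq_of_fixedPoint (hA : Measurable A) (hX : Measurable X)
    (hindep : IndepFun A X μ) (hfix : μ.map X = μ.map (fun ω => A ω * (1 + X ω))) {i : ℕ}
    (hXint : ∀ j ≤ i, Integrable (fun ω => X ω ^ j) μ) (hA1 : μ[fun ω => A ω ^ i] ≠ 1) :
    μ[fun ω => X ω ^ i] = μ[fun ω => A ω ^ i] / (1 - μ[fun ω => A ω ^ i])
      * ∑ j ∈ range i, (i.choose j : ℝ) * μ[fun ω => X ω ^ j] := by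
  have key := integral_pow_eq_mul_integral_one_add_pow hA hX hindep hfix i
  rw [integral_one_add_pow hXint, sum_range_succ, Nat.choose_self, Nat.cast_one, one_mul] at key
  rw [div_mul_eq_mul_div, eq_div_iff (sub_ne_zero.2 hA1.symm)]
  linear_combination key

end FixedPoint

theorem stmt16_general {Ω : Type*} [MeasureSpace Ω] [IsProbabilityMeasure (ℙ : Measure Ω)]
    (A X : Ω → ℝ) (k : ℕ) (hk : 1 ≤ k)
    (hAmeas : Measurable A) (hXmeas : Measurable X)
    (hindep : IndepFun A X ℙ)
    (hfix : Measure.map X ℙ = Measure.map (fun ω => A ω * (1 + X ω)) ℙ)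
    (hXint : ∀ j ≤ k, Integrable (fun ω => X ω ^ j) ℙ)
    (hAlt : ∀ i, 1 ≤ i → i ≤ k → 𝔼[fun ω => A ω ^ i] < 1) :
    𝔼[fun ω => X ω ^ k]
      = 𝔼[fun ω => A ω ^ k] / (1 - 𝔼[fun ω => A ω ^ k])
        * ∑ j ∈ Finset.range k, (k.choose j : ℝ) * 𝔼[fun ω => X ω ^ j] ∧
    𝔼[fun ω => X ω ^ k]
      = ∑ S ∈ (Finset.Ioo 0 k).powerset,
          (let l := Finset.sort (insert 0 (insert k S)) (· ≤ ·)
           ((l.zip l.tail).map (fun q : ℕ × ℕ =>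
             (q.2.choose q.1 : ℝ)
               * (𝔼[fun ω => A ω ^ q.2] / (1 - 𝔼[fun ω => A ω ^ q.2])))).prod) := by
  have hrec : ∀ i, 1 ≤ i → i ≤ k → 𝔼[fun ω => X ω ^ i]
      = 𝔼[fun ω => A ω ^ i] / (1 - 𝔼[fun ω => A ω ^ i])
        * ∑ j ∈ range i, (i.choose j : ℝ) * 𝔼[fun ω => X ω ^ j] := fun i hi hik =>
    integral_pow_eq_of_fixedPoint hAmeas hXmeas hindep hfix
      (fun j hj => hXint j (hj.trans hik)) (hAlt i hi hik).ne
  refine ⟨hrec k hk le_rfl, ?_⟩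
  -- the sum over chains in the statement is `chainSum f k k` unfolded
  refine eq_chainSum_of_recursion _ (m := fun n => 𝔼[fun ω => X ω ^ n]) (by simp)
    (fun n hn hnk => ?_) k le_rfl
  rw [hrec n hn hnk, mul_sum]
  exact sum_congr rfl fun j _ => by ring

/-- Positive moments of the stationary solution of `X∞ = A(1+X∞)`: the recursion
`E[X∞^k] = (E[A^k]/(1-E[A^k])) ∑_{j<k} C(k,j) E[X∞^j]` and its closed-form solution
as a sum over chains `0 = i₀ < i₁ < ⋯ < i_m = k` (encoded by the subsets
`S ⊆ {1,…,k-1}` of intermediate indices) of `∏_j C(i_j, i_{j-1}) E[A^{i_j}]/(1-E[A^{i_j}])`. -/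
theorem stmt16 {Ω : Type*} [MeasureSpace Ω] [IsProbabilityMeasure (ℙ : Measure Ω)]
    (A X : Ω → ℝ) (k : ℕ) (hk : 1 ≤ k)
    (hApos : ∀ ω, 0 < A ω) (hXpos : ∀ ω, 0 ≤ X ω)
    (hAmeas : Measurable A) (hXmeas : Measurable X)
    (hindep : IndepFun A X ℙ)
    (hfix : Measure.map X ℙ = Measure.map (fun ω => A ω * (1 + X ω)) ℙ)
    (hAint : ∀ i ≤ k, Integrable (fun ω => A ω ^ i) ℙ)
    (hXint : ∀ j ≤ k, Integrable (fun ω => X ω ^ j) ℙ)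
    (hAlt : ∀ i, 1 ≤ i → i ≤ k → 𝔼[fun ω => A ω ^ i] < 1) :
    𝔼[fun ω => X ω ^ k]
      = 𝔼[fun ω => A ω ^ k] / (1 - 𝔼[fun ω => A ω ^ k])
        * ∑ j ∈ Finset.range k, (k.choose j : ℝ) * 𝔼[fun ω => X ω ^ j] ∧
    𝔼[fun ω => X ω ^ k]
      = ∑ S ∈ (Finset.Ioo 0 k).powerset,
          (let l := Finset.sort (insert 0 (insert k S)) (· ≤ ·)
           ((l.zip l.tail).map (fun q : ℕ × ℕ =>
             (q.2.choose q.1 : ℝ)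
               * (𝔼[fun ω => A ω ^ q.2] / (1 - 𝔼[fun ω => A ω ^ q.2])))).prod) :=
  stmt16_general A X k hk hAmeas hXmeas hindep hfix hXint hAlt
end
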